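/- Let S ⊆ A be a local operator system generating the unital locally C*-algebra A. A linear map π : A → B(H) is an admissible local boundary representation for S if and only if there exist λ₀ ∈ Λ and a boundary representation π_{λ₀} : A_{λ₀} → B(H) for the operator system S_{λ₀} such that π = π_{λ₀} ∘ π^A_{λ₀}. -/

import Mathlib

open scoped ComplexOrder

/-- A C*-seminorm on a complex *-algebra. -/
structure IsCstarSeminorm {A : Type*} [Ring A] [StarRing A] [Algebra ℂ A] (p : A → ℝ) : Prop where
  nonneg : ∀ a, 0 ≤ p a
  map_zero' : p 0 = 0
  add_le : ∀ a b, p (a + b) ≤ p a + p b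
  smul : ∀ (c : ℂ) (a : A), p (c • a) = ‖c‖ * p a
  mul_le : ∀ a b, p (a * b) ≤ p a * p b
  star_eq : ∀ a, p (star a) = p a
  cstar : ∀ a, p (star a * a) = p a ^ 2

/-- The family of canonical C*-seminorms on the matrix algebras `Mₙ(A)` induced by a
C*-seminorm `p` on `A`. -/
structure IsMatrixCstarSeminormFamily {A : Type*} [Ring A] [StarRing A] [Algebra ℂ A]
    (p : A → ℝ) (pn : ∀ n : ℕ, Matrix (Fin n) (Fin n) A → ℝ) : Prop where
  cstar : ∀ n, IsCstarSeminorm (pn n)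
  ker : ∀ n (M : Matrix (Fin n) (Fin n) A), pn n M = 0 ↔ ∀ i j, p (M i j) = 0
  one : ∀ a : A, pn 1 (fun _ _ => a) = p a

/-- `λ`-positivity of a matrix over `A` relative to the matrix seminorm `pn` (at level `λ`):
`M = b*b + c` with `pn c = 0`. -/
def LamPos {A : Type*} [Ring A] [StarRing A]
    (pn : ∀ n : ℕ, Matrix (Fin n) (Fin n) A → ℝ) (n : ℕ)
    (M : Matrix (Fin n) (Fin n) A) : Prop :=
  ∃ x c : Matrix (Fin n) (Fin n) A, pn n c = 0 ∧ M = star x * x + c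

/-- Positivity of a matrix of bounded operators, i.e. positivity in `B(H^{⊕n}) ≅ Mₙ(B(H))`. -/
def MatPosOp {H : Type*} [NormedAddCommGroup H] [InnerProductSpace ℂ H] [CompleteSpace H]
    {n : ℕ} (T : Matrix (Fin n) (Fin n) (H →L[ℂ] H)) : Prop :=
  ∃ X : Matrix (Fin n) (Fin n) (H →L[ℂ] H), T = star X * X

/-- The bounded operator on `H^{⊕n}` (with the `ℓ²`-Hilbert space structure) induced by an
`n × n` matrix of bounded operators on `H`. -/
noncomputable def matOp {H : Type*} [NormedAddCommGroup H] [InnerProductSpace ℂ H]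
    {n : ℕ} (T : Matrix (Fin n) (Fin n) (H →L[ℂ] H)) :
    PiLp 2 (fun _ : Fin n => H) →L[ℂ] PiLp 2 (fun _ : Fin n => H) :=
  ((PiLp.continuousLinearEquiv 2 ℂ (fun _ : Fin n => H)).symm :
      ((_ : Fin n) → H) →L[ℂ] PiLp 2 (fun _ : Fin n => H)) ∘L
    (ContinuousLinearMap.pi fun i => ∑ j, (T i j) ∘L (ContinuousLinearMap.proj j)) ∘L
    ((PiLp.continuousLinearEquiv 2 ℂ (fun _ : Fin n => H)) :
      PiLp 2 (fun _ : Fin n => H) →L[ℂ] ((_ : Fin n) → H))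

/-- A map into `B(H)` has trivial commutant (irreducibility). -/
def HasTrivialCommutant {R H : Type*} [NormedAddCommGroup H] [InnerProductSpace ℂ H]
    (φ : R → (H →L[ℂ] H)) : Prop :=
  ∀ T : H →L[ℂ] H, (∀ a, T * φ a = φ a * T) → ∃ c : ℂ, T = c • (1 : H →L[ℂ] H)

/-- Complete positivity at level `λ` for a linear map defined on all of `A`, with values in
`B(H)`: `λ`-positive matrices go to positive operator matrices, and matrices annihilated by the
`λ`-th matrix seminorm go to zero. -/
def IsLamCPmap {A H : Type*} [Ring A] [StarRing A] [Algebra ℂ A]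
    [NormedAddCommGroup H] [InnerProductSpace ℂ H] [CompleteSpace H]
    (pn : ∀ n : ℕ, Matrix (Fin n) (Fin n) A → ℝ) (φ : A →ₗ[ℂ] (H →L[ℂ] H)) : Prop :=
  (∀ (n : ℕ) (M : Matrix (Fin n) (Fin n) A), LamPos pn n M → MatPosOp (M.map φ)) ∧
  (∀ (n : ℕ) (M : Matrix (Fin n) (Fin n) A), pn n M = 0 → M.map φ = 0)

/-- Complete positivity at level `λ` for a linear map defined on a local operator system
`S ⊆ A`, with values in `B(H)`. -/
def IsLamCPmapOn {A H : Type*} [Ring A] [StarRing A] [Algebra ℂ A]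
    [NormedAddCommGroup H] [InnerProductSpace ℂ H] [CompleteSpace H]
    (pn : ∀ n : ℕ, Matrix (Fin n) (Fin n) A → ℝ) (S : Submodule ℂ A)
    (φ : ↥S →ₗ[ℂ] (H →L[ℂ] H)) : Prop :=
  (∀ (n : ℕ) (M : Matrix (Fin n) (Fin n) ↥S), LamPos pn n (M.map Subtype.val) →
      MatPosOp (M.map fun s => φ s)) ∧
  (∀ (n : ℕ) (M : Matrix (Fin n) (Fin n) ↥S), pn n (M.map Subtype.val) = 0 →
      M.map (fun s => φ s) = 0)

/-- Complete positivity (in the C*-algebraic, purely algebraic sense) of a linear map from a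
ring with involution to `B(H)`: matrices of the form `x*x` are sent to positive operator
matrices. For a C*-algebra this is the usual notion of complete positivity. -/
def IsCstarCPmap {R H : Type*} [Ring R] [StarRing R] [Algebra ℂ R]
    [NormedAddCommGroup H] [InnerProductSpace ℂ H] [CompleteSpace H]
    (φ : R →ₗ[ℂ] (H →L[ℂ] H)) : Prop :=
  ∀ (n : ℕ) (M : Matrix (Fin n) (Fin n) R),
    (∃ x : Matrix (Fin n) (Fin n) R, M = star x * x) → MatPosOp (M.map φ)

/-- A boundary representation (in the sense of Arveson) of a C*-algebra `R` for the operator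
system `T ⊆ R`: an irreducible representation which is the unique unital completely positive
extension of its restriction to `T`. -/
def IsBoundaryRep {R H : Type*} [Ring R] [StarRing R] [Algebra ℂ R]
    [NormedAddCommGroup H] [InnerProductSpace ℂ H] [CompleteSpace H]
    (T : Set R) (ψ : R →⋆ₐ[ℂ] (H →L[ℂ] H)) : Prop :=
  HasTrivialCommutant ⇑ψ ∧
  ∀ χ : R →ₗ[ℂ] (H →L[ℂ] H), χ 1 = 1 → IsCstarCPmap χ → (∀ t ∈ T, χ t = ψ t) →
    ∀ b, χ b = ψ b

/-- An admissible local boundary representation of the locally C*-algebra `A` for the local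
operator system `S ⊆ A`. -/
def IsAdmLocBdryRep {Λ A H : Type*} [Ring A] [StarRing A] [Algebra ℂ A]
    [NormedAddCommGroup H] [InnerProductSpace ℂ H] [CompleteSpace H]
    (p : Λ → A → ℝ) (pn : Λ → ∀ n : ℕ, Matrix (Fin n) (Fin n) A → ℝ)
    (S : Submodule ℂ A) (π : A →⋆ₐ[ℂ] (H →L[ℂ] H)) : Prop :=
  HasTrivialCommutant ⇑π ∧
  ∃ l₀ : Λ, (∀ a, ‖π a‖ ≤ p l₀ a) ∧
    ∀ φ : A →ₗ[ℂ] (H →L[ℂ] H), φ 1 = 1 → (∃ l, IsLamCPmap (pn l) φ) →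
      (∀ a, ‖φ a‖ ≤ p l₀ a) → (∀ s ∈ S, φ s = π s) → ∀ a, φ a = π a

/-- An admissible local completely positive map between local operator systems
`S₁ ⊆ A₁` and `S₂ ⊆ A₂` (same index set `Λ` of seminorms). -/
def IsAdmLocCP {Λ A₁ A₂ : Type*} [Ring A₁] [StarRing A₁] [Algebra ℂ A₁]
    [Ring A₂] [StarRing A₂] [Algebra ℂ A₂]
    (pn₁ : Λ → ∀ n : ℕ, Matrix (Fin n) (Fin n) A₁ → ℝ)
    (pn₂ : Λ → ∀ n : ℕ, Matrix (Fin n) (Fin n) A₂ → ℝ)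
    (S₁ : Submodule ℂ A₁) (S₂ : Submodule ℂ A₂) (φ : ↥S₁ →ₗ[ℂ] ↥S₂) : Prop :=
  ∀ (l : Λ) (n : ℕ) (M : Matrix (Fin n) (Fin n) ↥S₁),
    (LamPos (pn₁ l) n (M.map Subtype.val) →
      LamPos (pn₂ l) n (M.map fun s => ((φ s : ↥S₂) : A₂))) ∧
    (pn₁ l n (M.map Subtype.val) = 0 → pn₂ l n (M.map fun s => ((φ s : ↥S₂) : A₂)) = 0)

/-- A local completely isometric map between local operator systems. -/
def IsLocCompIsometric {Λ A₁ A₂ : Type*} [Ring A₁] [StarRing A₁] [Algebra ℂ A₁]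
    [Ring A₂] [StarRing A₂] [Algebra ℂ A₂]
    (pn₁ : Λ → ∀ n : ℕ, Matrix (Fin n) (Fin n) A₁ → ℝ)
    (pn₂ : Λ → ∀ n : ℕ, Matrix (Fin n) (Fin n) A₂ → ℝ)
    (S₁ : Submodule ℂ A₁) (S₂ : Submodule ℂ A₂) (φ : ↥S₁ →ₗ[ℂ] ↥S₂) : Prop :=
  ∀ (l : Λ) (n : ℕ) (M : Matrix (Fin n) (Fin n) ↥S₁),
    pn₂ l n (M.map fun s => ((φ s : ↥S₂) : A₂)) = pn₁ l n (M.map Subtype.val)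

/-- A completely positive map (algebraic sense) between operator systems `T₁ ⊆ R₁`, `T₂ ⊆ R₂`
sitting in C*-algebras. -/
def IsCstarCPmapOn {R₁ R₂ : Type*} [Ring R₁] [StarRing R₁] [Algebra ℂ R₁]
    [Ring R₂] [StarRing R₂] [Algebra ℂ R₂]
    (T₁ : Submodule ℂ R₁) (T₂ : Submodule ℂ R₂) (ψ : ↥T₁ →ₗ[ℂ] ↥T₂) : Prop :=
  ∀ (n : ℕ) (M : Matrix (Fin n) (Fin n) ↥T₁),
    (∃ x : Matrix (Fin n) (Fin n) R₁, M.map Subtype.val = star x * x) →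
    ∃ y : Matrix (Fin n) (Fin n) R₂, M.map (fun s => ((ψ s : ↥T₂) : R₂)) = star y * y

/-- A local boundary ideal for a local operator system `S ⊆ A`: a closed two-sided *-ideal such
that the quotient map is completely isometric on `S` with respect to the quotient matrix
seminorms. -/
def IsLocBdryIdeal {Λ A : Type*} [Ring A] [StarRing A] [Algebra ℂ A] [TopologicalSpace A]
    (pn : Λ → ∀ n : ℕ, Matrix (Fin n) (Fin n) A → ℝ) (S : Submodule ℂ A)
    (I : Set A) : Prop :=
  (∃ J : TwoSidedIdeal A, (J : Set A) = I) ∧ (∀ a ∈ I, star a ∈ I) ∧ IsClosed I ∧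
  ∀ (l : Λ) (n : ℕ) (M : Matrix (Fin n) (Fin n) ↥S),
    sInf {r : ℝ | ∃ C : Matrix (Fin n) (Fin n) A, (∀ i j, C i j ∈ I) ∧
        r = pn l n (M.map Subtype.val + C)} = pn l n (M.map Subtype.val)


/-!
The bound `‖π a‖ ≤ p_{λ₀} a = ‖π_{λ₀} a‖` says precisely that `π` vanishes on the kernel of the
surjection `π_{λ₀} : A → A_{λ₀}`, so `π` and every competing map bounded by `p_{λ₀}` factor
through `A_{λ₀}`. Under this factorisation unital `λ`-completely positive maps on `A` correspond
to unital completely positive maps on the C*-algebra `A_{λ₀}`: matrices `y* y` over `A_{λ₀}` lift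
to `x* x` over `A`, which are `λ`-positive for every `λ`; conversely a unital completely positive
map on a C*-algebra is contractive, hence bounded by `p_{λ₀}` after composing with `π_{λ₀}`.
Irreducibility passes along surjections, so the two uniqueness properties are the same.
-/

open Function

section LiftOfSurjective

variable {R M N E : Type*} [Ring R] [AddCommGroup M] [Module R M] [AddCommGroup N] [Module R N]
  [AddCommGroup E] [Module R E]

noncomputable def LinearMap.liftOfSurjective (ρ : M →ₗ[R] N) (hρ : Surjective ρ)
    (φ : M →ₗ[R] E) (hker : ∀ a, ρ a = 0 → φ a = 0) : N →ₗ[R] E :=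
  (LinearMap.ker ρ).liftQ φ hker ∘ₗ (ρ.quotKerEquivOfSurjective hρ).symm.toLinearMap

@[simp]
theorem LinearMap.liftOfSurjective_apply (ρ : M →ₗ[R] N) (hρ : Surjective ρ) (φ : M →ₗ[R] E)
    (hker : ∀ a, ρ a = 0 → φ a = 0) (a : M) : ρ.liftOfSurjective hρ φ hker (ρ a) = φ a := by
  change (LinearMap.ker ρ).liftQ φ hker ((ρ.quotKerEquivOfSurjective hρ).symm (ρ a)) = φ a
  rw [LinearMap.quotKerEquivOfSurjective_symm_apply]
  rfl

theorem LinearMap.liftOfSurjective_comp (ρ : M →ₗ[R] N) (hρ : Surjective ρ) (φ : M →ₗ[R] E)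
    (hker : ∀ a, ρ a = 0 → φ a = 0) : ρ.liftOfSurjective hρ φ hker ∘ₗ ρ = φ := by
  ext a
  simp

end LiftOfSurjective

section StarAlgHomLift

variable {R A B C : Type*} [CommRing R] [Ring A] [StarRing A] [Algebra R A]
  [Ring B] [StarRing B] [Algebra R B] [Ring C] [StarRing C] [Algebra R C]

noncomputable def StarAlgHom.liftOfSurjective (ρ : A →⋆ₐ[R] B) (hρ : Surjective ρ)
    (φ : A →⋆ₐ[R] C) (hker : ∀ a, ρ a = 0 → φ a = 0) : B →⋆ₐ[R] C :=
  let f : B →ₗ[R] C :=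
    ρ.toAlgHom.toLinearMap.liftOfSurjective hρ φ.toAlgHom.toLinearMap hker
  have hf (a : A) : f (ρ a) = φ a := LinearMap.liftOfSurjective_apply _ hρ _ hker a
  { AlgHom.ofLinearMap f (by rw [← map_one ρ, hf, map_one])
      (hρ.forall₂.2 fun a b => by rw [← map_mul, hf, hf, hf, map_mul]) with
    map_star' := hρ.forall.2 fun a => by
      change f (star (ρ a)) = star (f (ρ a))
      rw [← map_star, hf, hf, map_star] }

@[simp]
theorem StarAlgHom.liftOfSurjective_apply (ρ : A →⋆ₐ[R] B) (hρ : Surjective ρ)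
    (φ : A →⋆ₐ[R] C) (hker : ∀ a, ρ a = 0 → φ a = 0) (a : A) :
    ρ.liftOfSurjective hρ φ hker (ρ a) = φ a :=
  LinearMap.liftOfSurjective_apply _ hρ _ hker a

end StarAlgHomLift

theorem Matrix.map_star_mul_self {n R S F : Type*} [Fintype n] [Ring R] [StarRing R] [Ring S]
    [StarRing S] [FunLike F R S] [RingHomClass F R S] [StarHomClass F R S] (f : F)
    (x : Matrix n n R) : (star x * x).map f = star (x.map f) * x.map f := by
  rw [Matrix.map_mul, Matrix.star_eq_conjTranspose, Matrix.star_eq_conjTranspose,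
    Matrix.conjTranspose_map f (map_star f)]

section Operators

variable {H : Type*} [NormedAddCommGroup H] [InnerProductSpace ℂ H] [CompleteSpace H]

def Matrix.colApply {n : ℕ} (X : Matrix (Fin n) (Fin n) (H →L[ℂ] H)) (j : Fin n) (η : H) :
    PiLp 2 (fun _ : Fin n => H) :=
  WithLp.toLp 2 fun k => X k j η

theorem Matrix.inner_colApply {n : ℕ} (X : Matrix (Fin n) (Fin n) (H →L[ℂ] H)) (i j : Fin n)
    (η ζ : H) : inner ℂ (X.colApply i η) (X.colApply j ζ) = inner ℂ η ((star X * X) i j ζ) := by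
  simp [Matrix.colApply, PiLp.inner_apply, Matrix.mul_apply, ContinuousLinearMap.star_eq_adjoint,
    ContinuousLinearMap.adjoint_inner_right]

theorem Matrix.norm_colApply_sq {n : ℕ} (X : Matrix (Fin n) (Fin n) (H →L[ℂ] H)) (j : Fin n)
    (η : H) : ‖X.colApply j η‖ ^ 2 = RCLike.re (inner ℂ η ((star X * X) j j η)) := by
  rw [← Matrix.inner_colApply, inner_self_eq_norm_sq]

theorem MatPosOp.re_inner_apply_nonneg {n : ℕ} {T : Matrix (Fin n) (Fin n) (H →L[ℂ] H)}
    (hT : MatPosOp T) (j : Fin n) (η : H) : 0 ≤ RCLike.re (inner ℂ η (T j j η)) := by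
  obtain ⟨X, rfl⟩ := hT
  rw [← Matrix.norm_colApply_sq]
  positivity

theorem IsCstarCPmap.re_inner_map_star_mul_self_nonneg {R : Type*} [Ring R] [StarRing R]
    [Algebra ℂ R] {χ : R →ₗ[ℂ] (H →L[ℂ] H)} (hχ : IsCstarCPmap χ) (x : R) (η : H) :
    0 ≤ RCLike.re (inner ℂ η (χ (star x * x) η)) :=
  (hχ 1 (Matrix.of fun _ _ => star x * x) ⟨Matrix.of fun _ _ => x, by
    ext i j
    simp [Matrix.mul_apply]⟩).re_inner_apply_nonneg 0 η

variable {C : Type*} [NormedRing C] [StarRing C] [CStarRing C] [NormedAlgebra ℂ C]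
  [StarModule ℂ C] [CompleteSpace C]

theorem IsCstarCPmap.re_inner_map_star_mul_self_le {χ : C →ₗ[ℂ] (H →L[ℂ] H)} (hχ : IsCstarCPmap χ)
    (h1 : χ 1 = 1) (b : C) (η : H) :
    RCLike.re (inner ℂ η (χ (star b * b) η)) ≤ ‖b‖ ^ 2 * ‖η‖ ^ 2 := by
  let : CStarAlgebra C := {}
  let : PartialOrder C := CStarAlgebra.spectralOrder C
  let : StarOrderedRing C := CStarAlgebra.spectralOrderedRing C
  obtain ⟨d, hd⟩ := CStarAlgebra.nonneg_iff_eq_star_mul_self.mp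
    (sub_nonneg.mpr (CStarAlgebra.star_mul_le_algebraMap_norm_sq (a := b)))
  have hχd : χ (star d * d) = ((‖b‖ ^ 2 : ℝ) : ℂ) • 1 - χ (star b * b) := by
    rw [← hd, map_sub, IsScalarTower.algebraMap_apply ℝ ℂ C, Algebra.algebraMap_eq_smul_one,
      map_smul, h1]
    rfl
  have := hχ.re_inner_map_star_mul_self_nonneg d η
  rw [hχd] at this
  simpa [inner_sub_right, inner_smul_right, ← Complex.ofReal_pow, inner_self_eq_norm_sq_to_K]
    using this

theorem IsCstarCPmap.norm_apply_le {χ : C →ₗ[ℂ] (H →L[ℂ] H)} (hχ : IsCstarCPmap χ) (h1 : χ 1 = 1)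
    (a : C) : ‖χ a‖ ≤ ‖a‖ := by
  -- Writing `χ [[1, a], [a*, a*a]] = X* X` exhibits `χ a` as the product of the adjoint of an
  -- isometric column of `X` with a column of norm at most `‖a‖`.
  obtain ⟨X, hX⟩ := hχ 2 !![1, a; star a, star a * a] ⟨!![1, a; 0, 0], by
    ext i j
    fin_cases i <;> fin_cases j <;> simp [Matrix.mul_apply, Fin.sum_univ_two]⟩
  have hX00 : (star X * X) 0 0 = 1 := by simp [← hX, h1]
  have hX01 : (star X * X) 0 1 = χ a := by simp [← hX]
  have hX11 : (star X * X) 1 1 = χ (star a * a) := by simp [← hX]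
  refine (χ a).opNorm_le_bound (norm_nonneg a) fun η => ?_
  set ζ := χ a η
  have hcs : ‖ζ‖ ^ 2 ≤ ‖X.colApply 0 ζ‖ * ‖X.colApply 1 η‖ :=
    calc ‖ζ‖ ^ 2 = RCLike.re (inner ℂ ζ ζ) := (inner_self_eq_norm_sq ζ).symm
      _ = RCLike.re (inner ℂ (X.colApply 0 ζ) (X.colApply 1 η)) := by
        rw [Matrix.inner_colApply, hX01]
      _ ≤ ‖X.colApply 0 ζ‖ * ‖X.colApply 1 η‖ := re_inner_le_norm _ _
  have hcol₀ : ‖X.colApply 0 ζ‖ = ‖ζ‖ := by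
    rw [← sq_eq_sq₀ (norm_nonneg _) (norm_nonneg _), Matrix.norm_colApply_sq, hX00,
      one_apply_eq_self, inner_self_eq_norm_sq]
  have hcol₁ : ‖X.colApply 1 η‖ ≤ ‖a‖ * ‖η‖ := by
    refine (pow_le_pow_iff_left₀ (norm_nonneg _) (by positivity) two_ne_zero).mp ?_
    rw [Matrix.norm_colApply_sq, hX11, mul_pow]
    exact hχ.re_inner_map_star_mul_self_le h1 a η
  rw [hcol₀, sq] at hcs
  refine le_trans ?_ hcol₁
  rcases (norm_nonneg ζ).eq_or_lt with hζ | hζ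
  · rw [← hζ]
    positivity
  · exact le_of_mul_le_mul_left hcs hζ

end Operators

theorem hasTrivialCommutant_comp_iff {X Y H : Type*} [NormedAddCommGroup H]
    [InnerProductSpace ℂ H] {f : X → Y} (hf : Surjective f) {g : Y → (H →L[ℂ] H)} :
    HasTrivialCommutant (g ∘ f) ↔ HasTrivialCommutant g := by
  simp only [HasTrivialCommutant, comp_apply, hf.forall]

section Composition

variable {A R H : Type*} [Ring A] [StarRing A] [Algebra ℂ A] [Ring R] [StarRing R]
  [Algebra ℂ R] [NormedAddCommGroup H] [InnerProductSpace ℂ H] [CompleteSpace H]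
  {pn : ∀ n : ℕ, Matrix (Fin n) (Fin n) A → ℝ} {χ : R →ₗ[ℂ] (H →L[ℂ] H)}

theorem IsCstarCPmap.isLamCPmap_comp (hχ : IsCstarCPmap χ) (ρ : A →⋆ₐ[ℂ] R)
    (hker : ∀ n (M : Matrix (Fin n) (Fin n) A), pn n M = 0 → M.map ρ = 0) :
    IsLamCPmap pn (χ ∘ₗ ρ.toAlgHom.toLinearMap) := by
  have hmap {n : ℕ} (M : Matrix (Fin n) (Fin n) A) :
      M.map (χ ∘ₗ ρ.toAlgHom.toLinearMap) = (M.map ρ).map χ := rfl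
  refine ⟨?_, fun n M hM => by rw [hmap, hker n M hM, Matrix.map_zero _ (map_zero χ)]⟩
  rintro n _ ⟨x, c, hc, rfl⟩
  rw [hmap, Matrix.map_add _ (map_add ρ), hker n c hc, add_zero, Matrix.map_star_mul_self]
  exact hχ n _ ⟨_, rfl⟩

theorem IsCstarCPmap.of_isLamCPmap_comp (ρ : A →⋆ₐ[ℂ] R) (hρ : Surjective ρ)
    (hpn : ∀ n, pn n 0 = 0) (hφ : IsLamCPmap pn (χ ∘ₗ ρ.toAlgHom.toLinearMap)) :
    IsCstarCPmap χ := by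
  rintro n _ ⟨y, rfl⟩
  obtain ⟨x, rfl⟩ : ∃ x : Matrix (Fin n) (Fin n) A, x.map ρ = y :=
    ⟨y.map (surjInv hρ), by ext; simp [surjInv_eq hρ]⟩
  rw [← Matrix.map_star_mul_self]
  exact hφ.1 n (star x * x) ⟨x, 0, hpn n, (add_zero _).symm⟩

end Composition

section LocallyCstar

variable {Λ A H : Type*} [Ring A] [StarRing A] [Algebra ℂ A] {B : Λ → Type*}
  [∀ l, NormedRing (B l)] [∀ l, StarRing (B l)] [∀ l, CStarRing (B l)]
  [∀ l, NormedAlgebra ℂ (B l)] [∀ l, StarModule ℂ (B l)] [∀ l, CompleteSpace (B l)]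
  [NormedAddCommGroup H] [InnerProductSpace ℂ H] [CompleteSpace H]
  {p : Λ → A → ℝ} {π : ∀ l, A →⋆ₐ[ℂ] B l} {pn : Λ → ∀ n : ℕ, Matrix (Fin n) (Fin n) A → ℝ}
  {S : Submodule ℂ A} {πrep : A →⋆ₐ[ℂ] (H →L[ℂ] H)}

theorem IsAdmLocBdryRep.exists_isBoundaryRep (hsurj : ∀ l, Surjective (π l))
    (hnorm : ∀ l a, ‖π l a‖ = p l a) (hpn : ∀ l, IsMatrixCstarSeminormFamily (p l) (pn l))
    (h : IsAdmLocBdryRep p pn S πrep) :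
    ∃ (l₀ : Λ) (ψ : B l₀ →⋆ₐ[ℂ] (H →L[ℂ] H)),
      IsBoundaryRep (π l₀ '' (S : Set A)) ψ ∧ ∀ a, πrep a = ψ (π l₀ a) := by
  obtain ⟨hirr, l₀, hbound, huniq⟩ := h
  have hker (a : A) (ha : π l₀ a = 0) : πrep a = 0 :=
    norm_le_zero_iff.mp (by simpa [← hnorm, ha] using hbound a)
  set ψ := (π l₀).liftOfSurjective (hsurj l₀) πrep hker
  have hψ (a : A) : ψ (π l₀ a) = πrep a := StarAlgHom.liftOfSurjective_apply _ _ _ hker a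
  have hfac : ⇑πrep = ⇑ψ ∘ ⇑(π l₀) := funext fun a => (hψ a).symm
  refine ⟨l₀, ψ, ⟨(hasTrivialCommutant_comp_iff (hsurj l₀)).mp (hfac ▸ hirr), ?_⟩,
    fun a => (hψ a).symm⟩
  intro χ hχ1 hχ hχS
  have hmatker (n : ℕ) (M : Matrix (Fin n) (Fin n) A) (hM : pn l₀ n M = 0) :
      M.map (π l₀) = 0 := by
    ext i j
    rw [Matrix.map_apply, Matrix.zero_apply, ← norm_eq_zero, hnorm]
    exact ((hpn l₀).ker n M).mp hM i j
  have hφ := huniq (χ ∘ₗ (π l₀).toAlgHom.toLinearMap) (by simp [hχ1])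
    ⟨l₀, hχ.isLamCPmap_comp _ hmatker⟩
    (fun a => by simpa [hnorm] using hχ.norm_apply_le hχ1 (π l₀ a))
    (fun s hs => by simpa [hψ] using hχS _ ⟨s, hs, rfl⟩)
  exact (hsurj l₀).forall.2 fun a => by simpa [hψ] using hφ a

theorem IsBoundaryRep.isAdmLocBdryRep (hsurj : ∀ l, Surjective (π l))
    (hnorm : ∀ l a, ‖π l a‖ = p l a) (hpn : ∀ l, IsMatrixCstarSeminormFamily (p l) (pn l))
    {l₀ : Λ} {ψ : B l₀ →⋆ₐ[ℂ] (H →L[ℂ] H)} (hψ : IsBoundaryRep (π l₀ '' (S : Set A)) ψ)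
    (hfac : ∀ a, πrep a = ψ (π l₀ a)) : IsAdmLocBdryRep p pn S πrep := by
  obtain ⟨hirr, huniq⟩ := hψ
  have hfac' : ⇑πrep = ⇑ψ ∘ ⇑(π l₀) := funext hfac
  refine ⟨hfac' ▸ (hasTrivialCommutant_comp_iff (hsurj l₀)).mpr hirr, l₀, fun a => ?_, ?_⟩
  · let : CStarAlgebra (B l₀) := {}
    rw [hfac, ← hnorm]
    exact NonUnitalStarAlgHom.norm_apply_le ψ _
  rintro φ hφ1 ⟨l, hφ⟩ hbound hφS
  have hker (a : A) (ha : π l₀ a = 0) : φ a = 0 :=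
    norm_le_zero_iff.mp (by simpa [← hnorm, ha] using hbound a)
  obtain ⟨χ, rfl⟩ : ∃ χ : B l₀ →ₗ[ℂ] (H →L[ℂ] H), χ ∘ₗ (π l₀).toAlgHom.toLinearMap = φ :=
    ⟨_, LinearMap.liftOfSurjective_comp _ (hsurj l₀) φ hker⟩
  have hχcp : IsCstarCPmap χ :=
    .of_isLamCPmap_comp (π l₀) (hsurj l₀) (fun n => ((hpn l).cstar n).map_zero') hφ
  have hχψ := huniq χ (by simpa using hφ1) hχcp
    (by rintro _ ⟨s, hs, rfl⟩; simpa [hfac] using hφS s hs)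
  intro a
  simpa [hfac] using hχψ (π l₀ a)

end LocallyCstar

theorem stmt13_general {Λ : Type*} {A : Type*} [Ring A] [StarRing A] [Algebra ℂ A]
    {B : Λ → Type*} [∀ l, NormedRing (B l)] [∀ l, StarRing (B l)] [∀ l, CStarRing (B l)]
    [∀ l, NormedAlgebra ℂ (B l)] [∀ l, StarModule ℂ (B l)] [∀ l, CompleteSpace (B l)]
    (p : Λ → A → ℝ)
    (π : ∀ l, A →⋆ₐ[ℂ] B l) (hsurj : ∀ l, Function.Surjective ⇑(π l))
    (hnorm : ∀ l a, ‖(π l) a‖ = p l a)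
    (pn : Λ → ∀ n : ℕ, Matrix (Fin n) (Fin n) A → ℝ)
    (hpn : ∀ l, IsMatrixCstarSeminormFamily (p l) (pn l))
    (S : Submodule ℂ A)
    {H : Type*} [NormedAddCommGroup H] [InnerProductSpace ℂ H] [CompleteSpace H]
    (πrep : A →⋆ₐ[ℂ] (H →L[ℂ] H)) :
    IsAdmLocBdryRep p pn S πrep ↔
      ∃ (l₀ : Λ) (ψ : B l₀ →⋆ₐ[ℂ] (H →L[ℂ] H)),
        IsBoundaryRep (⇑(π l₀) '' (S : Set A)) ψ ∧ ∀ a : A, πrep a = ψ ((π l₀) a) :=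
  ⟨IsAdmLocBdryRep.exists_isBoundaryRep hsurj hnorm hpn,
    fun ⟨_, _, hψ, hfac⟩ => hψ.isAdmLocBdryRep hsurj hnorm hpn hfac⟩

/-- `π` is an admissible local boundary representation for `S` iff it factors
through some quotient `A_{λ₀}` as a boundary representation for `S_{λ₀}`. -/
theorem stmt13 {Λ : Type*} [Preorder Λ] {A : Type*} [Ring A] [StarRing A] [Algebra ℂ A] [StarModule ℂ A]
    {B : Λ → Type*} [∀ l, NormedRing (B l)] [∀ l, StarRing (B l)] [∀ l, CStarRing (B l)]
    [∀ l, NormedAlgebra ℂ (B l)] [∀ l, StarModule ℂ (B l)] [∀ l, CompleteSpace (B l)]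
    (p : Λ → A → ℝ) (hp : ∀ l, IsCstarSeminorm (p l))
    (hmono : ∀ ⦃l₁ l₂ : Λ⦄, l₁ ≤ l₂ → ∀ a, p l₁ a ≤ p l₂ a)
    (π : ∀ l, A →⋆ₐ[ℂ] B l) (hsurj : ∀ l, Function.Surjective ⇑(π l))
    (hnorm : ∀ l a, ‖(π l) a‖ = p l a)
    (pn : Λ → ∀ n : ℕ, Matrix (Fin n) (Fin n) A → ℝ)
    (hpn : ∀ l, IsMatrixCstarSeminormFamily (p l) (pn l))
    (S : Submodule ℂ A) (hSstar : ∀ s ∈ S, star s ∈ S) (hSone : (1 : A) ∈ S)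
    [TopologicalSpace A] (hind : Topology.IsInducing (fun a : A => fun l => (π l) a))
    (hgen : closure ((StarAlgebra.adjoin ℂ (S : Set A) : StarSubalgebra ℂ A) : Set A)
      = Set.univ)
    {H : Type*} [NormedAddCommGroup H] [InnerProductSpace ℂ H] [CompleteSpace H]
    (πrep : A →⋆ₐ[ℂ] (H →L[ℂ] H)) :
    IsAdmLocBdryRep p pn S πrep ↔
      ∃ (l₀ : Λ) (ψ : B l₀ →⋆ₐ[ℂ] (H →L[ℂ] H)),
        IsBoundaryRep (⇑(π l₀) '' (S : Set A)) ψ ∧ ∀ a : A, πrep a = ψ ((π l₀) a) :=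
  stmt13_general p π hsurj hnorm pn hpn S πrep
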